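/- Let k_1 < ... < k_s enumerate S_n = {⌊n/k⌋ : 1 ≤ k ≤ n}. Then the s × s matrix U_n with entries U_{ij} = ⌊n/(k_i k_j)⌋ is symmetric, has all entries equal to 1 on the antidiagonal (i + j = s + 1), and all entries equal to 0 strictly below the antidiagonal (i + j > s + 1). -/
import Mathlib


/-- The set of approximate divisors of `n`: distinct values of `⌊n/k⌋` for `1 ≤ k ≤ n`. -/
def Sn (n : ℕ) : Finset ℕ := (Finset.Icc 1 n).image (fun k => n / k)

/-- The increasing enumeration `k_1 < ⋯ < k_s` of `S_n` (0-indexed by `Fin s`). -/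
noncomputable def kseq (n : ℕ) : Fin (Sn n).card → ℕ :=
  fun i => ((Sn n).orderIsoOfFin rfl i : ℕ)

/-- Cardinal's matrix `U_n`, with `(i,j)` entry `⌊n/(k_i k_j)⌋`. -/
noncomputable def Umat (n : ℕ) : Matrix (Fin (Sn n).card) (Fin (Sn n).card) ℤ :=
  fun i j => (n / (kseq n i * kseq n j) : ℕ)

section
variable (n : ℕ)

lemma Sn_one_le (hn : 0 < n) {x : ℕ} (hx : x ∈ Sn n) : 1 ≤ x := by
  simp only [Sn, Finset.mem_image, Finset.mem_Icc] at hx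
  obtain ⟨k, ⟨hk1, hk2⟩, rfl⟩ := hx
  exact Nat.one_le_div_iff (by omega) |>.2 hk2

lemma Sn_le {x : ℕ} (hx : x ∈ Sn n) : x ≤ n := by
  simp only [Sn, Finset.mem_image, Finset.mem_Icc] at hx
  obtain ⟨k, ⟨hk1, hk2⟩, rfl⟩ := hx
  exact Nat.div_le_self n k

lemma div_mem_Sn (hn : 0 < n) {x : ℕ} (hx : x ∈ Sn n) : n / x ∈ Sn n := by
  have h1 := Sn_one_le n hn hx
  have h2 := Sn_le n hx
  exact Finset.mem_image.2 ⟨x, Finset.mem_Icc.2 ⟨h1, h2⟩, rfl⟩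

lemma div_div_div (k : ℕ) (hk1 : 1 ≤ k) (hk2 : k ≤ n) : n / (n / (n / k)) = n / k := by
  set m := n / k with hm
  have hm1 : 1 ≤ m := Nat.one_le_div_iff (by omega) |>.2 hk2
  have hkm : k ≤ n / m := Nat.le_div_iff_mul_le hm1 |>.2 (by
    rw [hm, Nat.mul_comm]; exact Nat.div_mul_le_self n k)
  have hpos : 0 < n / m := lt_of_lt_of_le hk1 hkm
  have hle : n / (n / m) ≤ n / k := Nat.div_le_div_left hkm hk1
  have hge : m ≤ n / (n / m) := Nat.le_div_iff_mul_le hpos |>.2 (by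
    rw [Nat.mul_comm]; exact Nat.div_mul_le_self n m)
  omega

lemma Sn_inv (hn : 0 < n) {x : ℕ} (hx : x ∈ Sn n) : n / (n / x) = x := by
  simp only [Sn, Finset.mem_image, Finset.mem_Icc] at hx
  obtain ⟨k, ⟨hk1, hk2⟩, rfl⟩ := hx
  exact div_div_div n k hk1 hk2

lemma Sn_anti (hn : 0 < n) {x y : ℕ} (hx : x ∈ Sn n) (hy : y ∈ Sn n) (hxy : x < y) :
    n / y < n / x := by
  have h : n / y ≤ n / x := Nat.div_le_div_left (le_of_lt hxy) (Sn_one_le n hn hx)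
  rcases h.lt_or_eq with h | h
  · exact h
  · exfalso
    have h1 := Sn_inv n hn hx
    have h2 := Sn_inv n hn hy
    rw [h] at h2
    omega

lemma kseq_eq (i : Fin (Sn n).card) : kseq n i = (Sn n).orderEmbOfFin rfl i :=
  Finset.coe_orderIsoOfFin_apply _ _ _

lemma kseq_mem (i : Fin (Sn n).card) : kseq n i ∈ Sn n := by
  rw [kseq_eq]; exact Finset.orderEmbOfFin_mem _ _ _

lemma kseq_strictMono : StrictMono (kseq n) := by
  have : kseq n = fun i => (Sn n).orderEmbOfFin rfl i := funext (kseq_eq n)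
  rw [this]
  exact ((Sn n).orderEmbOfFin rfl).strictMono

lemma kseq_rev (hn : 0 < n) (i : Fin (Sn n).card) : kseq n i.rev = n / kseq n i := by
  have key : (fun j : Fin (Sn n).card => n / kseq n j.rev) = (Sn n).orderEmbOfFin rfl := by
    apply Finset.orderEmbOfFin_unique
    · intro j; exact div_mem_Sn n hn (kseq_mem n _)
    · intro a b hab
      have h1 : b.rev < a.rev := by
        simp only [Fin.lt_def, Fin.val_rev]
        have := a.isLt; have := b.isLt
        omega
      exact Sn_anti n hn (kseq_mem n _) (kseq_mem n _) (kseq_strictMono n h1)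
  have := congrFun key i.rev
  simp only [Fin.rev_rev] at this
  rw [kseq_eq, ← this]

end

/-- `U_n` is symmetric, has all entries `1` on the antidiagonal (`i + j = s + 1` in
1-indexing, i.e. `i + j + 1 = s` with 0-indexing) and all entries `0` strictly below
the antidiagonal (`i + j > s + 1` in 1-indexing, i.e. `i + j + 1 > s`). -/
theorem stmt_6 (n : ℕ) (hn : 0 < n) :
    (Umat n).IsSymm ∧
    (∀ i j : Fin (Sn n).card, (i : ℕ) + (j : ℕ) + 1 = (Sn n).card → Umat n i j = 1) ∧
    (∀ i j : Fin (Sn n).card, (Sn n).card < (i : ℕ) + (j : ℕ) + 1 → Umat n i j = 0) := by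
  refine ⟨?_, ?_, ?_⟩
  · ext i j
    simp only [Matrix.transpose_apply, Umat, Nat.mul_comm]
  · intro i j hij
    have hj : j = i.rev := by
      apply Fin.ext
      simp only [Fin.val_rev]; omega
    subst hj
    rw [Umat, kseq_rev n hn i]
    set k := kseq n i with hk
    have hk1 : 1 ≤ k := Sn_one_le n hn (kseq_mem n i)
    have hk2 : k ≤ n := Sn_le n (kseq_mem n i)
    have hq1 : 1 ≤ n / k := Nat.one_le_div_iff (by omega) |>.2 hk2
    have hmod := Nat.div_add_mod n k
    have hmodlt : n % k < k := Nat.mod_lt n (by omega)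
    have h1 : n / (k * (n / k)) = 1 := by
      apply Nat.div_eq_of_lt_le
      · rw [Nat.one_mul]; exact Nat.mul_div_le n k
      · have : k ≤ k * (n / k) := Nat.le_mul_of_pos_right k hq1
        have h2 : (1 + 1) * (k * (n / k)) = k * (n / k) + k * (n / k) := by ring
        omega
    rw [h1]; rfl
  · intro i j hij
    have hrev : i.rev < j := by
      rw [Fin.lt_def]
      simp only [Fin.val_rev]
      have := i.isLt
      omega
    have hkj : kseq n i.rev < kseq n j := kseq_strictMono n hrev
    rw [kseq_rev n hn i] at hkj
    rw [Umat]
    set k := kseq n i with hk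
    have hk1 : 1 ≤ k := Sn_one_le n hn (kseq_mem n i)
    have hmod := Nat.div_add_mod n k
    have hmodlt : n % k < k := Nat.mod_lt n (by omega)
    have hlt : n < k * kseq n j := by
      have h1 : k * (n / k + 1) ≤ k * kseq n j := Nat.mul_le_mul_left k (by omega)
      have h2 : k * (n / k) + k = k * (n / k + 1) := by ring
      omega
    rw [Nat.div_eq_of_lt hlt]; rfl
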